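/- Suppose the metrics g and ĝ on U satisfy g = ĝλ for a smooth matrix-valued field λ, P is a g-orthogonal projection, and the potential matching condition P(grad_g V − grad_ĝ V̂) = 0 holds at every point of U, where V, V̂ : U → ℝ are smooth and (grad_g V)^k = g^{kj} ∂_j V, (grad_ĝ V̂)^k = ĝ^{kj} ∂_j V̂. Then for every smooth vector field X on U, (λPX)^i ∂_i V̂ = (PX)^i ∂_i V at every point of U. -/
import Mathlib


/-!
Statement 2 (Proposition 3 of Auckly–Kapitanski–White): if `g = ĝ λ` and the
potential matching condition `P(grad_g V − grad_ĝ V̂) = 0` holds on `U`, then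
`(λPX)(V̂) = (PX)(V)` on `U` for every smooth vector field `X`.
-/

noncomputable section

open Matrix

/-- Partial derivative of a scalar function in the `i`-th coordinate direction. -/
def pderiv' {n : ℕ} (f : (Fin n → ℝ) → ℝ) (i : Fin n) (x : Fin n → ℝ) : ℝ :=
  fderiv ℝ f x (Pi.single i 1)

/-- Pointwise application of a matrix-valued field to a vector field. -/
def mvec {n : ℕ} (A : (Fin n → ℝ) → Matrix (Fin n) (Fin n) ℝ)
    (X : (Fin n → ℝ) → Fin n → ℝ) (x : Fin n → ℝ) (i : Fin n) : ℝ :=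
  ∑ j, A x i j * X x j

/-- Gradient of `V` with respect to the metric `g`: `(grad_g V)^k = g^{kj} ∂_j V`. -/
def gradOf {n : ℕ} (g : (Fin n → ℝ) → Matrix (Fin n) (Fin n) ℝ)
    (V : (Fin n → ℝ) → ℝ) (x : Fin n → ℝ) (k : Fin n) : ℝ :=
  ∑ j, (g x)⁻¹ k j * pderiv' V j x

lemma mulVec_dot' {n : ℕ} (M : Matrix (Fin n) (Fin n) ℝ) (u w : Fin n → ℝ) :
    (M *ᵥ u) ⬝ᵥ w = u ⬝ᵥ (Mᵀ *ᵥ w) := by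
  rw [dotProduct_comm, Matrix.dotProduct_mulVec,
    ← Matrix.mulVec_transpose, dotProduct_comm]

theorem statement2 {n : ℕ} (U : Set (Fin n → ℝ)) (hU : IsOpen U)
    (g gh lam P : (Fin n → ℝ) → Matrix (Fin n) (Fin n) ℝ)
    (V Vh : (Fin n → ℝ) → ℝ)
    -- smoothness of all the fields on `U`
    (hgsm : ∀ i j, ContDiffOn ℝ (⊤ : ℕ∞) (fun x => g x i j) U)
    (hghsm : ∀ i j, ContDiffOn ℝ (⊤ : ℕ∞) (fun x => gh x i j) U)
    (hlamsm : ∀ i j, ContDiffOn ℝ (⊤ : ℕ∞) (fun x => lam x i j) U)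
    (hPsm : ∀ i j, ContDiffOn ℝ (⊤ : ℕ∞) (fun x => P x i j) U)
    (hVsm : ContDiffOn ℝ (⊤ : ℕ∞) V U)
    (hVhsm : ContDiffOn ℝ (⊤ : ℕ∞) Vh U)
    -- `g` and `ĝ` are metrics (symmetric positive definite)
    (hgpos : ∀ x ∈ U, (g x).PosDef)
    (hghpos : ∀ x ∈ U, (gh x).PosDef)
    -- `g = ĝ λ`
    (hglam : ∀ x ∈ U, g x = gh x * lam x)
    -- `P` is a `g`-orthogonal projection
    (hPP : ∀ x ∈ U, P x * P x = P x)
    (hPsym : ∀ x ∈ U, (g x * P x)ᵀ = g x * P x)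
    -- potential matching condition `P(grad_g V − grad_ĝ V̂) = 0`
    (hmatch : ∀ x ∈ U, ∀ i,
      (∑ j, P x i j * (gradOf g V x j - gradOf gh Vh x j)) = 0) :
    ∀ X : (Fin n → ℝ) → Fin n → ℝ,
      (∀ k, ContDiffOn ℝ (⊤ : ℕ∞) (fun x => X x k) U) →
      ∀ x ∈ U,
        (∑ i, mvec lam (mvec P X) x i * pderiv' Vh i x) =
          ∑ i, mvec P X x i * pderiv' V i x := by
  intro X hX x hx
  set G := g x with hGdef
  set Gh := gh x with hGhdef
  set L := lam x with hLdef
  set Q := P x with hQdef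
  set u := X x with hudef
  set dV : Fin n → ℝ := fun i => pderiv' V i x with hdV
  set dVh : Fin n → ℝ := fun i => pderiv' Vh i x with hdVh
  set a : Fin n → ℝ := G⁻¹ *ᵥ dV with hadef
  set b : Fin n → ℝ := Gh⁻¹ *ᵥ dVh with hbdef
  have hG := hgpos x hx
  have hGh := hghpos x hx
  -- symmetry of the metrics
  have hGsym : Gᵀ = G := by
    have := hG.isHermitian
    ext i j
    exact congrFun (congrFun this i) j
  have hGhsym : Ghᵀ = Gh := by
    have := hGh.isHermitian
    ext i j
    exact congrFun (congrFun this i) j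
  -- invertibility
  have hGa : G *ᵥ a = dV := by
    rw [hadef, Matrix.mulVec_mulVec, Matrix.mul_nonsing_inv _ hG.det_pos.ne'.isUnit,
      Matrix.one_mulVec]
  have hGhb : Gh *ᵥ b = dVh := by
    rw [hbdef, Matrix.mulVec_mulVec, Matrix.mul_nonsing_inv _ hGh.det_pos.ne'.isUnit,
      Matrix.one_mulVec]
  -- matching condition in vector form
  have hab : Q *ᵥ a = Q *ᵥ b := by
    have h0 : Q *ᵥ (a - b) = 0 := by
      funext i
      exact hmatch x hx i
    rw [Matrix.mulVec_sub, sub_eq_zero] at h0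
    exact h0
  -- symmetry of G * Q
  have hQG : Qᵀ * G = G * Q := by
    have h := hPsym x hx
    calc Qᵀ * G = Qᵀ * Gᵀ := by rw [hGsym]
    _ = (G * Q)ᵀ := by rw [Matrix.transpose_mul]
    _ = G * Q := h
  -- Λᵀ Ĝ = G
  have hLG : Lᵀ * Gh = G := by
    calc Lᵀ * Gh = Lᵀ * Ghᵀ := by rw [hGhsym]
    _ = (Gh * L)ᵀ := by rw [Matrix.transpose_mul]
    _ = Gᵀ := by rw [← hglam x hx]
    _ = G := hGsym
  -- main computation
  have key : (L *ᵥ (Q *ᵥ u)) ⬝ᵥ dVh = (Q *ᵥ u) ⬝ᵥ dV := by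
    calc (L *ᵥ (Q *ᵥ u)) ⬝ᵥ dVh
        = (L *ᵥ (Q *ᵥ u)) ⬝ᵥ (Gh *ᵥ b) := by rw [hGhb]
      _ = (Q *ᵥ u) ⬝ᵥ (Lᵀ *ᵥ (Gh *ᵥ b)) := mulVec_dot' ..
      _ = (Q *ᵥ u) ⬝ᵥ ((Lᵀ * Gh) *ᵥ b) := by rw [Matrix.mulVec_mulVec]
      _ = (Q *ᵥ u) ⬝ᵥ (G *ᵥ b) := by rw [hLG]
      _ = u ⬝ᵥ (Qᵀ *ᵥ (G *ᵥ b)) := mulVec_dot' ..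
      _ = u ⬝ᵥ ((Qᵀ * G) *ᵥ b) := by rw [Matrix.mulVec_mulVec]
      _ = u ⬝ᵥ ((G * Q) *ᵥ b) := by rw [hQG]
      _ = u ⬝ᵥ (G *ᵥ (Q *ᵥ b)) := by rw [← Matrix.mulVec_mulVec]
      _ = u ⬝ᵥ (G *ᵥ (Q *ᵥ a)) := by rw [hab]
      _ = u ⬝ᵥ ((G * Q) *ᵥ a) := by rw [Matrix.mulVec_mulVec]
      _ = u ⬝ᵥ ((Qᵀ * G) *ᵥ a) := by rw [hQG]
      _ = u ⬝ᵥ (Qᵀ *ᵥ (G *ᵥ a)) := by rw [← Matrix.mulVec_mulVec]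
      _ = (Q *ᵥ u) ⬝ᵥ (G *ᵥ a) := (mulVec_dot' ..).symm
      _ = (Q *ᵥ u) ⬝ᵥ dV := by rw [hGa]
  exact key
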